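/- arXiv:1901.07221 — 2 statements merged into one kernel-verified Lean document; each statement's English description precedes it below -/
import Mathlib

section
/- Let n ≥ 0 and set N = 2^{(n+1)^2} · 2^{n+1}. Index a set L of N distinct points as e_i(E) for (i, E) ∈ {1,...,2^{n+1}} × A, where A is a set of size 2^{(n+1)^2} partitioned into 2^{n^2+2n} blocks Γ(D,B,C) of size 2 indexed by triples (D,B,C) in a set T ⊆ A₀³ (A₀ of size 2^{n^2}), where T = {(D,B,C) : D → B and B → C} for a relation → on A₀ with constant in- and out-degree 2^n. Then there exists a permutation θ of L such that for each (D,B,C) ∈ T, each E ∈ Γ(D,B,C) and each F in the block-union Ω(B,C) = ⋃_{C'} Γ(B,C,C'), there are unique indices i, i' with θ(e_i(E)) = e_{i'}(F). -/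
/-- permutation lemma: with `A₀` of size `2^(n²)` carrying a
relation `r` of constant in- and out-degree `2ⁿ`, the atoms of the next
generation are the pairs `(t, j)` with `t = (D,B,C)` a triple satisfying
`r D B ∧ r B C` and `j ∈ Fin 2` (so the block `Γ(D,B,C)` has size 2), and the
labelled points are `Fin (2^(n+1)) × atoms`.  There is a permutation `θ` of the
labelled points such that for every admissible triple `(D,B,C)`, every atom
`E ∈ Γ(D,B,C)` and every atom `F ∈ Ω(B,C) = ⋃_{C'} Γ(B,C,C')`, there is a unique
pair of indices `(i, i')` with `θ (e_i E) = e_{i'} F`. -/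
theorem permutation_lemma (n : ℕ) (A₀ : Type*) [Fintype A₀]
    (hcard : Fintype.card A₀ = 2 ^ (n ^ 2))
    (r : A₀ → A₀ → Prop) [DecidableRel r]
    (hout : ∀ x, (Finset.univ.filter (fun y => r x y)).card = 2 ^ n)
    (hin : ∀ x, (Finset.univ.filter (fun y => r y x)).card = 2 ^ n) :
    ∃ θ : Equiv.Perm (Fin (2 ^ (n + 1)) ×
        ({t : A₀ × A₀ × A₀ // r t.1 t.2.1 ∧ r t.2.1 t.2.2} × Fin 2)),
      ∀ (D B C : A₀), r D B → r B C →
        ∀ E F : {t : A₀ × A₀ × A₀ // r t.1 t.2.1 ∧ r t.2.1 t.2.2} × Fin 2,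
          E.1.1 = (D, B, C) → (F.1.1.1 = B ∧ F.1.1.2.1 = C) →
          ∃! ii' : Fin (2 ^ (n + 1)) × Fin (2 ^ (n + 1)),
            θ (ii'.1, E) = (ii'.2, F) := by
  classical
  have hpred : ∀ B : A₀, Fintype.card ({D // r D B} × Fin 2) = 2 ^ (n + 1) := by
    intro B
    simp [Fintype.card_prod, Fintype.card_subtype, hin B, pow_succ, mul_comm]
  have hsucc : ∀ C : A₀, Fintype.card ({C' // r C C'} × Fin 2) = 2 ^ (n + 1) := by
    intro C
    simp [Fintype.card_prod, Fintype.card_subtype, hout C, pow_succ, mul_comm]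
  let β : ∀ B : A₀, ({D // r D B} × Fin 2) ≃ Fin (2 ^ (n + 1)) :=
    fun B => Fintype.equivFinOfCardEq (hpred B)
  let α : ∀ C : A₀, Fin (2 ^ (n + 1)) ≃ ({C' // r C C'} × Fin 2) :=
    fun C => (Fintype.equivFinOfCardEq (hsucc C)).symm
  let θ : Equiv.Perm (Fin (2 ^ (n + 1)) ×
      ({t : A₀ × A₀ × A₀ // r t.1 t.2.1 ∧ r t.2.1 t.2.2} × Fin 2)) :=
    { toFun := fun p =>
        (β p.2.1.1.2.1 (⟨p.2.1.1.1, p.2.1.2.1⟩, p.2.2),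
          (⟨(p.2.1.1.2.1, p.2.1.1.2.2, ((α p.2.1.1.2.2) p.1).1.1),
            ⟨p.2.1.2.2, ((α p.2.1.1.2.2) p.1).1.2⟩⟩, ((α p.2.1.1.2.2) p.1).2))
      invFun := fun q =>
        ((α q.2.1.1.2.1).symm (⟨q.2.1.1.2.2, q.2.1.2.2⟩, q.2.2),
          (⟨(((β q.2.1.1.1).symm q.1).1.1, q.2.1.1.1, q.2.1.1.2.1),
            ⟨((β q.2.1.1.1).symm q.1).1.2, q.2.1.2.1⟩⟩, ((β q.2.1.1.1).symm q.1).2))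
      left_inv := by
        rintro ⟨i, ⟨⟨D, B, C⟩, hDB, hBC⟩, j⟩
        simp
      right_inv := by
        rintro ⟨i', ⟨⟨B, C, C'⟩, hBC, hCC'⟩, k⟩
        simp }
  refine ⟨θ, ?_⟩
  rintro D B C hDB hBC ⟨⟨tE, hE1, hE2⟩, j⟩ ⟨⟨⟨B', C'', C'⟩, hF1, hF2⟩, k⟩ hE ⟨hFB, hFC⟩
  simp only at hE hFB hFC
  subst hFB; subst hFC; subst hE
  refine ⟨((α C'').symm (⟨C', hF2⟩, k), β B' (⟨D, hE1⟩, j)), ?_, ?_⟩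
  · show (β B' (⟨D, hE1⟩, j), _) = _
    simp [θ]
  · rintro ⟨i₁, i₂⟩ h
    have h' := h
    simp only [θ, Equiv.coe_fn_mk, Prod.mk.injEq, Subtype.mk.injEq] at h'
    obtain ⟨h1, ⟨_, _, h3⟩, h4⟩ := h'
    have : α C'' i₁ = (⟨C', hF2⟩, k) := by
      apply Prod.ext
      · exact Subtype.ext h3
      · exact h4
    have hi1 : i₁ = (α C'').symm (⟨C', hF2⟩, k) := by
      rw [← this, Equiv.symm_apply_apply]
    exact Prod.ext hi1 h1.symm
end

section
/- Let M be a compact metric space, f: M → M continuous, and K ⊆ M compact with f^p(K) ⊆ int(K) for some p ≥ 1 and K, f(K), ..., f^{p-1}(K) pairwise disjoint. Then there is an open neighborhood U of f in C(M, M) (uniform metric) such that every g ∈ U satisfies g^p(K) ⊆ int(K) and K, g(K), ..., g^{p-1}(K) pairwise disjoint. -/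
/-- The `n`-th iterate as a continuous map. -/
noncomputable def iterCM {M : Type*} [TopologicalSpace M] (g : C(M, M)) (n : ℕ) : C(M, M) :=
  ⟨(⇑g)^[n], g.continuous.iterate n⟩

lemma continuous_iterCM {M : Type*} [TopologicalSpace M] [LocallyCompactSpace M] (n : ℕ) :
    Continuous fun g : C(M, M) => iterCM g n := by
  induction n with
  | zero =>
      have h0 : (fun g : C(M, M) => iterCM g 0) = fun _ => (ContinuousMap.id M) := by
        funext g; ext x; simp [iterCM]
      rw [h0]; exact continuous_const
  | succ n ih =>
      have : (fun g : C(M, M) => iterCM g (n + 1)) =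
          fun g : C(M, M) => (iterCM g n).comp g := by
        funext g
        ext x
        simp [iterCM, Function.iterate_succ_apply]
      rw [this]
      exact ContinuousMap.continuous_comp'.comp (continuous_id.prodMk ih)

lemma isOpen_iter_mapsTo {M : Type*} [TopologicalSpace M] [LocallyCompactSpace M]
    {K O : Set M} (hK : IsCompact K) (hO : IsOpen O) (n : ℕ) :
    IsOpen {g : C(M, M) | (⇑g)^[n] '' K ⊆ O} := by
  have : {g : C(M, M) | (⇑g)^[n] '' K ⊆ O} =
      (fun g : C(M, M) => iterCM g n) ⁻¹' {h : C(M, M) | Set.MapsTo h K O} := by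
    ext g
    simp [iterCM, Set.mapsTo_iff_image_subset, Set.preimage]
  rw [this]
  exact (ContinuousMap.isOpen_setOf_mapsTo hK hO).preimage (continuous_iterCM n)

/-- being a periodic shrinking box (with fixed `K` and period `p`)
is an open condition in `C(M,M)` with the uniform metric. -/
theorem shrinking_box_open {M : Type*} [MetricSpace M] [CompactSpace M]
    (f : C(M, M)) (K : Set M) (hK : IsCompact K) (p : ℕ) (hp : 1 ≤ p)
    (hshrink : (⇑f)^[p] '' K ⊆ interior K)
    (hdisj : ∀ i < p, ∀ j < p, i ≠ j → Disjoint ((⇑f)^[i] '' K) ((⇑f)^[j] '' K)) :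
    ∃ U : Set C(M, M), IsOpen U ∧ f ∈ U ∧ ∀ g ∈ U,
      (⇑g)^[p] '' K ⊆ interior K ∧
      ∀ i < p, ∀ j < p, i ≠ j → Disjoint ((⇑g)^[i] '' K) ((⇑g)^[j] '' K) := by
  classical
  set C : ℕ → Set M := fun i => (⇑f)^[i] '' K with hC
  have hCcomp : ∀ i, IsCompact (C i) := fun i => hK.image (f.continuous.iterate i)
  have key : ∀ i j : ℕ, ∃ V W : Set M, IsOpen V ∧ IsOpen W ∧ C i ⊆ V ∧ C j ⊆ W ∧
      (i < p → j < p → i ≠ j → Disjoint V W) := by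
    intro i j
    by_cases h : i < p ∧ j < p ∧ i ≠ j
    · obtain ⟨hi, hj, hij⟩ := h
      obtain ⟨V, W, hVo, hWo, hCV, hCW, hVW⟩ :=
        SeparatedNhds.of_isCompact_isCompact_isClosed (hCcomp i) (hCcomp j)
          (hCcomp j).isClosed (hdisj i hi j hj hij)
      exact ⟨V, W, hVo, hWo, hCV, hCW, fun _ _ _ => hVW⟩
    · refine ⟨Set.univ, Set.univ, isOpen_univ, isOpen_univ, Set.subset_univ _,
        Set.subset_univ _, fun hi hj hij => absurd ⟨hi, hj, hij⟩ h⟩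
  choose V W hVo hWo hCV hCW hVW using key
  refine ⟨{g : C(M, M) | (⇑g)^[p] '' K ⊆ interior K} ∩
      ⋂ i ∈ Finset.range p, ⋂ j ∈ Finset.range p,
        ({g : C(M, M) | (⇑g)^[i] '' K ⊆ V i j} ∩ {g : C(M, M) | (⇑g)^[j] '' K ⊆ W i j}),
      ?_, ?_, ?_⟩
  · refine (isOpen_iter_mapsTo hK isOpen_interior p).inter ?_
    refine isOpen_biInter_finset fun i _ => ?_
    refine isOpen_biInter_finset fun j _ => ?_
    exact (isOpen_iter_mapsTo hK (hVo i j) i).inter (isOpen_iter_mapsTo hK (hWo i j) j)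
  · refine ⟨hshrink, ?_⟩
    simp only [Set.mem_iInter]
    intro i _ j _
    exact ⟨hCV i j, hCW i j⟩
  · intro g hg
    obtain ⟨hg1, hg2⟩ := hg
    refine ⟨hg1, ?_⟩
    intro i hi j hj hij
    simp only [Set.mem_iInter, Finset.mem_range] at hg2
    obtain ⟨hgi, hgj⟩ := hg2 i hi j hj
    exact Set.disjoint_of_subset hgi hgj (hVW i j hi hj hij)
end
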